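/- Let A be an associative unital ring, J₊ ⊆ A a left ideal, and ℘ ∈ A an element satisfying ℘² = ℘, 1 − ℘ ∈ J₊, and x℘ = 0 for every x ∈ J₊. Then ℘A℘ = {℘a℘ : a ∈ A} is closed under the multiplication of A and is an associative unital ring with identity element ℘, and the map ϖ : N(J₊) → ℘A℘, a ↦ ℘a℘, is a surjective multiplicative and additive map with ϖ(1) = ℘ and kernel exactly J₊ (in particular ℘(ab)℘ = (℘a℘)(℘b℘) for all a, b ∈ N(J₊)). Consequently ϖ factors through a ring isomorphism N(J₊)/J₊ ≅ ℘A℘, i.e. the reduction algebra R(A,J₊) is isomorphic to ℘A℘. -/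
import Mathlib


/-- The normalizer `N(J) = {a ∈ A : J * a ⊆ J}` of a left ideal `J` of a ring `A`,
as a subring of `A`. -/
def normalizerSubring (A : Type*) [Ring A] (J : Submodule A A) : Subring A where
  carrier := {a : A | ∀ x ∈ J, x * a ∈ J}
  mul_mem' {a b} ha hb x hx := by
    rw [← mul_assoc]; exact hb _ (ha x hx)
  one_mem' x hx := by simpa using hx
  add_mem' {a b} ha hb x hx := by
    rw [mul_add]; exact J.add_mem (ha x hx) (hb x hx)
  zero_mem' x hx := by simpa using J.zero_mem
  neg_mem' {a} ha x hx := by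
    rw [mul_neg]; exact J.neg_mem (ha x hx)

/-- The ring congruence on the normalizer `N(J)` of a left ideal `J ⊆ A` given by
congruence modulo `J`; its quotient is the reduction algebra `R(A,J) = N(J)/J`. -/
def reductionCon (A : Type*) [Ring A] (J : Submodule A A) :
    RingCon (normalizerSubring A J) where
  r a b := ((a : A) - (b : A)) ∈ J
  iseqv := by
    constructor
    · intro a; simpa using J.zero_mem
    · intro a b h; simpa using J.neg_mem h
    · intro a b c h₁ h₂; simpa using J.add_mem h₁ h₂
  add' := by
    intro a b c d h₁ h₂
    have : ((a : A) - b) + ((c : A) - d) ∈ J := J.add_mem h₁ h₂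
    simpa [sub_add_sub_comm] using this
  mul' := by
    intro a b c d h₁ h₂
    have key : (a : A) * ((c : A) - d) + ((a : A) - b) * (d : A) ∈ J := by
      refine J.add_mem ?_ ?_
      · exact J.smul_mem (a : A) h₂
      · exact d.2 _ h₁
    have : (a : A) * ((c : A) - d) + ((a : A) - b) * (d : A)
        = (a : A) * (c : A) - (b : A) * (d : A) := by noncomm_ring
    rwa [this] at key

/-- The set `℘A℘ = {℘ a ℘ : a ∈ A}`, as an additive subgroup of `A`
(for an idempotent `℘`). -/
def pApAddSubgroup (A : Type*) [Ring A] (p : A) : AddSubgroup A where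
  carrier := {y : A | ∃ a : A, y = p * a * p}
  add_mem' := by
    rintro y z ⟨a, rfl⟩ ⟨b, rfl⟩
    exact ⟨a + b, by noncomm_ring⟩
  zero_mem' := ⟨0, by simp⟩
  neg_mem' := by
    rintro y ⟨a, rfl⟩
    exact ⟨-a, by noncomm_ring⟩

/-- Let `A` be a ring, `J₊ ⊆ A` a left ideal, and `℘` an extremal projector for `J₊`
(`℘² = ℘`, `1 - ℘ ∈ J₊`, `J₊ ℘ = 0`).  Then `℘A℘` is closed under multiplication and
is an associative unital ring with identity `℘`; the map `ϖ : N(J₊) → ℘A℘`,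
`a ↦ ℘ a ℘`, is additive, multiplicative on `N(J₊)`, sends `1` to `℘`, is surjective
onto `℘A℘`, and has kernel exactly `J₊`.  Consequently `ϖ` factors through a ring
isomorphism `N(J₊)/J₊ ≅ ℘A℘`. -/
theorem reduction_algebra_iso_pAp
    (A : Type*) [Ring A] (J : Submodule A A) (p : A)
    (hidem : p * p = p) (hone : (1 : A) - p ∈ J) (hann : ∀ x ∈ J, x * p = 0) :
    (∀ y ∈ pApAddSubgroup A p, ∀ z ∈ pApAddSubgroup A p, y * z ∈ pApAddSubgroup A p) ∧
    (p ∈ pApAddSubgroup A p) ∧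
    (∀ y ∈ pApAddSubgroup A p, p * y = y ∧ y * p = y) ∧
    (∀ a b : A, p * (a + b) * p = p * a * p + p * b * p) ∧
    (p * 1 * p = p) ∧
    (∀ a b : normalizerSubring A J,
        p * ((a : A) * (b : A)) * p = (p * (a : A) * p) * (p * (b : A) * p)) ∧
    (∀ y ∈ pApAddSubgroup A p, ∃ a : normalizerSubring A J, p * (a : A) * p = y) ∧
    (∀ a : normalizerSubring A J, p * (a : A) * p = 0 ↔ (a : A) ∈ J) ∧
    ∃ e : (reductionCon A J).Quotient ≃+ pApAddSubgroup A p,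
      (∀ x y : (reductionCon A J).Quotient, ((e (x * y) : A) = (e x : A) * (e y : A))) ∧
      ((e 1 : A) = p) ∧
      (∀ a : normalizerSubring A J,
        (e ((reductionCon A J).mk' a) : A) = p * (a : A) * p) := by
  -- basic computations
  have hpy : ∀ a : A, p * (p * a * p) = p * a * p := by
    intro a
    rw [show p * (p * a * p) = (p * p) * a * p by noncomm_ring, hidem]
  have hyp : ∀ a : A, (p * a * p) * p = p * a * p := by
    intro a
    rw [mul_assoc, hidem]
  have hmul : ∀ y ∈ pApAddSubgroup A p, ∀ z ∈ pApAddSubgroup A p,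
      y * z ∈ pApAddSubgroup A p := by
    rintro y ⟨a, rfl⟩ z ⟨b, rfl⟩
    exact ⟨a * p * p * b, by noncomm_ring⟩
  have hpmem : p ∈ pApAddSubgroup A p := ⟨1, by rw [mul_one, hidem]⟩
  have hid : ∀ y ∈ pApAddSubgroup A p, p * y = y ∧ y * p = y := by
    rintro y ⟨a, rfl⟩
    exact ⟨hpy a, hyp a⟩
  have hadd : ∀ a b : A, p * (a + b) * p = p * a * p + p * b * p := by
    intro a b; noncomm_ring
  have honep : p * 1 * p = p := by rw [mul_one, hidem]
  -- multiplicativity on the normalizer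
  have hmult : ∀ a b : normalizerSubring A J,
      p * ((a : A) * (b : A)) * p = (p * (a : A) * p) * (p * (b : A) * p) := by
    rintro ⟨a, ha⟩ ⟨b, hb⟩
    have h1 : a * ((1 : A) - p) ∈ J := J.smul_mem a hone
    have h2 : (a * ((1 : A) - p)) * b ∈ J := hb _ h1
    have h3 : ((a * ((1 : A) - p)) * b) * p = 0 := hann _ h2
    have h4 : (p * a * p) * (p * b * p) = p * a * (p * p) * b * p := by noncomm_ring
    rw [h4, hidem]
    have h5 : p * (a * b) * p - p * a * p * b * p = p * (((a * ((1:A) - p)) * b) * p) := by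
      noncomm_ring
    have h6 : p * (a * b) * p - p * a * p * b * p = 0 := by rw [h5, h3, mul_zero]
    linear_combination (norm := noncomm_ring) h6
  -- decomposition : a - p a p ∈ J for a in the normalizer
  have hdecomp : ∀ a : normalizerSubring A J, (a : A) - p * (a : A) * p ∈ J := by
    rintro ⟨a, ha⟩
    have h1 : ((1 : A) - p) * a ∈ J := ha _ hone
    have h2 : (((1 : A) - p) * a) * p = 0 := hann _ h1
    have h3 : a - p * a * p = a * ((1:A) - p) + (((1:A) - p) * a) * p := by noncomm_ring
    rw [h3, h2, add_zero]
    exact J.smul_mem a hone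
  -- surjectivity from the normalizer
  have hN : ∀ a : A, p * a * p ∈ normalizerSubring A J := by
    intro a x hx
    have : x * (p * a * p) = (x * p) * (a * p) := by noncomm_ring
    rw [this, hann x hx, zero_mul]
    exact J.zero_mem
  have hsurj : ∀ y ∈ pApAddSubgroup A p, ∃ a : normalizerSubring A J,
      p * (a : A) * p = y := by
    rintro y ⟨a, rfl⟩
    refine ⟨⟨p * a * p, hN a⟩, ?_⟩
    show p * (p * a * p) * p = p * a * p
    rw [hpy a, hyp a]
  have hker : ∀ a : normalizerSubring A J, p * (a : A) * p = 0 ↔ (a : A) ∈ J := by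
    intro a
    constructor
    · intro h
      have := hdecomp a
      rw [h, sub_zero] at this
      exact this
    · intro h
      rw [mul_assoc, hann _ h, mul_zero]
  refine ⟨hmul, hpmem, hid, hadd, honep, hmult, hsurj, hker, ?_⟩
  -- the additive equivalence
  have hwd : ∀ a b : normalizerSubring A J, (reductionCon A J) a b →
      (⟨p * (a : A) * p, ⟨a, rfl⟩⟩ : pApAddSubgroup A p) = ⟨p * (b : A) * p, ⟨b, rfl⟩⟩ := by
    intro a b h
    have h0 : ((a : A) - b) * p = 0 := hann _ h
    have h1 : p * (a : A) * p - p * (b : A) * p = p * (((a : A) - b) * p) := by noncomm_ring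
    have h2 : p * (a : A) * p - p * (b : A) * p = 0 := by rw [h1, h0, mul_zero]
    exact Subtype.ext (sub_eq_zero.mp h2)
  refine ⟨⟨⟨fun x => Quotient.liftOn x
      (fun a : normalizerSubring A J =>
        (⟨p * (a : A) * p, ⟨a, rfl⟩⟩ : pApAddSubgroup A p)) hwd,
      fun y => (reductionCon A J).mk' ⟨(y : A), by
        obtain ⟨a, ha⟩ := y.2
        intro x hx
        have : x * (y : A) = (x * p) * (a * p) := by rw [ha]; noncomm_ring
        rw [this, hann x hx, zero_mul]
        exact J.zero_mem⟩, ?_, ?_⟩, ?_⟩, ?_, ?_, ?_⟩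
  · -- left inverse
    intro x
    refine Quotient.inductionOn x (fun a => ?_)
    refine Quotient.sound ?_
    show (reductionCon A J) _ a
    show ((p * (a : A) * p : A) - (a : A)) ∈ J
    simpa using J.neg_mem (hdecomp a)
  · -- right inverse
    intro y
    apply Subtype.ext
    show p * (y : A) * p = (y : A)
    obtain ⟨a, ha⟩ := y.2
    rw [ha, hpy a, hyp a]
  · -- additivity
    intro x y
    refine Quotient.inductionOn₂ x y (fun a b => ?_)
    apply Subtype.ext
    show p * ((a : A) + (b : A)) * p = p * (a : A) * p + p * (b : A) * p
    exact hadd a b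
  · -- multiplicativity
    intro x y
    refine Quotient.inductionOn₂ x y (fun a b => ?_)
    exact hmult a b
  · -- unit
    exact honep
  · -- formula on mk'
    intro a
    rfl
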